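/- Let R be a commutative ring, e ∈ R, and (G_m)_{m≥0} a sequence in R with generating series G(u) = ∑_{m≥0} G_m u^{-m} ∈ R[[u^{-1}]]. Define φ(G)_m = G_m − (∑_{l=1}^{m-1} (-2)^l G_{m-l-1})·e − (∑_{l=0}^{m-2} (-2)^l G_{m-l-2})·e². Then the generating series of (φ(G)_m) equals G(u)·(1 + e·u^{-1})·(1 − e·(u+2)^{-1}), where (u+2)^{-1} = ∑_{k≥0} (-2)^k u^{-(k+1)} in R[[u^{-1}]]. -/

import Mathlib

/-!
With `X = u⁻¹` and `h = ∑ (-2)^k X^k = (1 + 2X)⁻¹`, the two convolutions in `φ(G)` are `X²·h·G` and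
`(-2)·X²·h·G`, so `φ(G) = G·(1 + (2e - e²)·X²·h)`. On the other side `(u+2)⁻¹` is `X·h`, and
`(1 + eX)(1 - eXh) = 1 + (2e - e²)·X²·h` is exactly the relation `h·(1 + 2X) = 1`.
-/

open Finset PowerSeries

namespace PowerSeries

variable {R : Type*}

theorem mk_pow_mul_one_sub_C_mul_X [CommRing R] (a : R) : mk (a ^ ·) * (1 - C a * X) = 1 := by
  simpa [rescale_mk, rescale_X] using congrArg (rescale a) (mk_one_mul_one_sub_eq_one R)

theorem mk_ite_pow_pred_eq_X_mul [CommSemiring R] (a : R) :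
    mk (fun p => if p = 0 then 0 else a ^ (p - 1)) = X * mk (a ^ ·) := by
  ext (_ | p) <;> simp [coeff_succ_X_mul]

theorem coeff_X_sq_mul_mk_pow_mul_mk [CommSemiring R] (a : R) (G : ℕ → R) (m : ℕ) :
    coeff m (X ^ 2 * mk (a ^ ·) * mk G) = ∑ l ∈ range (m - 1), a ^ l * G (m - l - 2) := by
  rw [mul_assoc, coeff_X_pow_mul']
  split_ifs with hm
  · obtain ⟨n, rfl⟩ := Nat.exists_eq_add_of_le hm
    rw [coeff_mul,
      Nat.sum_antidiagonal_eq_sum_range_succ fun i j => coeff i (mk (a ^ ·)) * coeff j (mk G)]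
    refine sum_congr (by congr 1; omega) fun l _ => ?_
    simp only [coeff_mk]
    congr 2
    omega
  · rw [show m - 1 = 0 by omega, range_zero, sum_empty]

theorem sum_Icc_one_pow_mul_eq_mul_sum_range [CommSemiring R] (a : R) (G : ℕ → R) (m : ℕ) :
    ∑ l ∈ Icc 1 (m - 1), a ^ l * G (m - l - 1) =
      a * ∑ l ∈ range (m - 1), a ^ l * G (m - l - 2) := by
  rw [← Ico_add_one_right_eq_Icc, sum_Ico_eq_sum_range, Nat.add_sub_cancel, mul_sum]
  refine sum_congr rfl fun l _ => ?_
  rw [add_comm 1 l, pow_succ', mul_assoc, Nat.sub_sub, Nat.sub_sub, add_assoc]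

end PowerSeries

/-- Generating-function form of the partial-evaluation map on the generators `G^{(m)}`:
if `φ(G)_m = G_m − (∑_{l=1}^{m-1} (-2)^l G_{m-l-1})·e − (∑_{l=0}^{m-2} (-2)^l G_{m-l-2})·e²`,
then `∑_m φ(G)_m u^{-m} = G(u)·(1 + e·u⁻¹)·(1 − e·(u+2)⁻¹)` in `R[[u⁻¹]]`, where
`(u+2)⁻¹ = ∑_{k≥0} (-2)^k u^{-(k+1)}`. -/
theorem partial_evaluation_G_generating_function {R : Type*} [CommRing R] (e : R)
    (G φG : ℕ → R)
    (hφ : ∀ m : ℕ, φG m =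
      G m - (∑ l ∈ Finset.Icc 1 (m - 1), (-2 : R) ^ l * G (m - l - 1)) * e
          - (∑ l ∈ Finset.range (m - 1), (-2 : R) ^ l * G (m - l - 2)) * e ^ 2) :
    PowerSeries.mk φG =
      PowerSeries.mk G * (1 + PowerSeries.C e * PowerSeries.X) *
        (1 - PowerSeries.C e *
          PowerSeries.mk fun p => if p = 0 then 0 else (-2 : R) ^ (p - 1)) := by
  have hφG : PowerSeries.mk φG = PowerSeries.mk G +
      C (2 * e - e ^ 2) * (X ^ 2 * PowerSeries.mk ((-2 : R) ^ ·) * PowerSeries.mk G) := by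
    ext m
    rw [coeff_mk, hφ, map_add, coeff_C_mul, coeff_X_sq_mul_mk_pow_mul_mk,
      sum_Icc_one_pow_mul_eq_mul_sum_range, coeff_mk]
    ring
  have hgeom : PowerSeries.mk ((-2 : R) ^ ·) * (1 + 2 * X) = 1 := by
    simpa [sub_eq_add_neg, map_ofNat] using mk_pow_mul_one_sub_C_mul_X (-2 : R)
  rw [hφG, mk_ite_pow_pred_eq_X_mul]
  simp only [map_sub, map_mul, map_pow, map_ofNat]
  linear_combination (C e * X * PowerSeries.mk G) * hgeom
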